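/- arXiv:1702.08087 — 2 statements merged into one kernel-verified Lean document; each statement's English description precedes it below -/
import Mathlib

section
/- Let f(x,v) be a nonnegative integrable function on T^d × ℝ^d with finite second velocity moments, let ρ(x) = ∫ f(x,v) dv and u(x) = ∫ v f(x,v) dv / ρ(x) (where ρ > 0), and let ψ : T^d → ℝ be symmetric (ψ(x−y) = ψ(y−x)) and nonnegative. Then ∫∫∫∫ ψ(x−y) f(x,v) f(y,w) (v−w)·(u(x)−v) dv dw dx dy ≤ 0. -/
open MeasureTheory
open scoped RealInnerProductSpace

instance : Fact ((0:ℝ) < 1) := ⟨one_pos⟩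

/-- The flat torus `T^d`. -/
abbrev Td (d : ℕ) := Fin d → AddCircle (1:ℝ)

/-- The velocity space `ℝ^d`. -/
abbrev Vd (d : ℕ) := EuclideanSpace ℝ (Fin d)

/-- Cauchy–Schwarz for weighted integrals, via the discriminant trick. -/
lemma cs_aux {α : Type*} [MeasurableSpace α] {μ : Measure α} {g h : α → ℝ}
    (hg0 : ∀ a, 0 ≤ g a) (hg : Integrable g μ)
    (hgh : Integrable (fun a => g a * h a) μ)
    (hgh2 : Integrable (fun a => g a * h a ^ 2) μ)
    (hρ : 0 < ∫ a, g a ∂μ) :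
    (∫ a, g a * h a ∂μ) ^ 2 ≤ (∫ a, g a ∂μ) * ∫ a, g a * h a ^ 2 ∂μ := by
  set R := ∫ a, g a ∂μ with hR
  set M := ∫ a, g a * h a ∂μ with hM
  set t : ℝ := M / R with ht
  have key : 0 ≤ ∫ a, g a * (h a - t) ^ 2 ∂μ :=
    integral_nonneg fun a => mul_nonneg (hg0 a) (sq_nonneg _)
  have hexp : (fun a => g a * (h a - t) ^ 2)
      = fun a => g a * h a ^ 2 - (2 * t) * (g a * h a) + t ^ 2 * g a := by
    funext a; ring
  rw [hexp] at key
  have hsplit : ∫ a, (g a * h a ^ 2 - 2 * t * (g a * h a) + t ^ 2 * g a) ∂μ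
      = (∫ a, g a * h a ^ 2 ∂μ) - 2 * t * M + t ^ 2 * R := by
    rw [integral_add (f := fun a => g a * h a ^ 2 - 2 * t * (g a * h a))
          (g := fun a => t ^ 2 * g a)
          (hgh2.sub (hgh.const_mul (2*t))) (hg.const_mul (t^2)),
        integral_sub hgh2 (hgh.const_mul (2*t)), integral_const_mul, integral_const_mul]
  rw [hsplit] at key
  have ht' : t * R = M := div_mul_cancel₀ _ hρ.ne'
  nlinarith [sq_nonneg t, hρ]

/-- The mesoscopic Cucker-Smale dissipation dominates its hydrodynamic counterpart:
`∫∫∫∫ ψ(x−y) f(x,v) f(y,w) (v−w)·(u(x)−v) dv dw dx dy ≤ 0`. -/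
theorem cross_dissipation_nonpos {d : ℕ}
    (f : Td d × Vd d → ℝ) (ψ : Td d → ℝ) (ρ : Td d → ℝ) (u : Td d → Vd d)
    (hf0 : ∀ p, 0 ≤ f p) (hψ0 : ∀ z, 0 ≤ ψ z) (hψs : ∀ z, ψ (-z) = ψ z)
    (hfi : Integrable f)
    (hf2 : Integrable (fun p : Td d × Vd d => ‖p.2‖^2 * f p))
    (hρ : ∀ x, ρ x = ∫ v, f (x, v)) (hρpos : ∀ x, 0 < ρ x)
    (hu : ∀ x, u x = (ρ x)⁻¹ • ∫ v : Vd d, f (x, v) • v)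
    (hI : Integrable (fun p : (Td d × Vd d) × (Td d × Vd d) =>
        ψ (p.1.1 - p.2.1) * f p.1 * f p.2 * ⟪p.1.2 - p.2.2, u p.1.1 - p.1.2⟫))
    (hI2 : Integrable (fun p : (Td d × Vd d) × (Td d × Vd d) =>
        ψ (p.1.1 - p.2.1) * f p.1 * f p.2 * ‖p.1.2‖^2))
    (hI2' : Integrable (fun p : (Td d × Vd d) × (Td d × Vd d) =>
        ψ (p.1.1 - p.2.1) * f p.1 * f p.2 * ‖p.2.2‖^2))
    (hI3 : Integrable (fun p : (Td d × Vd d) × (Td d × Vd d) =>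
        ψ (p.1.1 - p.2.1) * f p.1 * f p.2 * ⟪p.1.2, u p.1.1⟫))
    (hI4 : Integrable (fun p : (Td d × Vd d) × (Td d × Vd d) =>
        ψ (p.1.1 - p.2.1) * f p.1 * f p.2 * ⟪p.2.2, u p.1.1⟫)) :
    ∫ p : (Td d × Vd d) × (Td d × Vd d),
        ψ (p.1.1 - p.2.1) * f p.1 * f p.2 * ⟪p.1.2 - p.2.2, u p.1.1 - p.1.2⟫ ≤ 0 := by
  -- product structure of the volume measures
  have vP : (volume : Measure (Td d × Vd d))
      = (volume : Measure (Td d)).prod (volume : Measure (Vd d)) := Measure.volume_eq_prod _ _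
  have vPP : (volume : Measure ((Td d × Vd d) × (Td d × Vd d)))
      = (volume : Measure (Td d × Vd d)).prod (volume : Measure (Td d × Vd d)) :=
    Measure.volume_eq_prod _ _
  -- the two key auxiliary integrands
  set K : (Td d × Vd d) × (Td d × Vd d) → ℝ :=
    fun p => ψ (p.1.1 - p.2.1) * f p.1 * f p.2 * ⟪p.2.2, p.1.2 - u p.1.1⟫ with hKdef
  set L : (Td d × Vd d) × (Td d × Vd d) → ℝ :=
    fun p => ψ (p.1.1 - p.2.1) * f p.1 * f p.2 * ⟪p.1.2, p.1.2 - u p.1.1⟫ with hLdef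
  have hL : Integrable L := by
    refine (hI2.sub hI3).congr (Filter.Eventually.of_forall fun p => ?_)
    simp only [Pi.sub_apply, hLdef, inner_sub_right, real_inner_self_eq_norm_sq]
    ring
  have hK : Integrable K := by
    refine (hI.add hL).congr (Filter.Eventually.of_forall fun p => ?_)
    simp only [Pi.add_apply, hKdef, hLdef, inner_sub_left, inner_sub_right,
      real_inner_self_eq_norm_sq]
    ring
  -- slice integrability in the velocity variable
  have hfiP : Integrable f ((volume : Measure (Td d)).prod (volume : Measure (Vd d))) := by
    rw [← vP]; exact hfi
  have hf2P : Integrable (fun p : Td d × Vd d => ‖p.2‖^2 * f p)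
      ((volume : Measure (Td d)).prod (volume : Measure (Vd d))) := by
    rw [← vP]; exact hf2
  have hs1 : ∀ᵐ x : Td d, Integrable (fun v => f (x, v)) := hfiP.prod_right_ae
  have hs2 : ∀ᵐ x : Td d, Integrable (fun v : Vd d => ‖v‖^2 * f (x, v)) := hf2P.prod_right_ae
  have hs3 : ∀ᵐ x : Td d, Integrable (fun v : Vd d => f (x, v) • v) := by
    filter_upwards [hs1, hs2] with x h1 h2
    refine (h1.add h2).mono' (h1.aestronglyMeasurable.smul aestronglyMeasurable_id)
      (Filter.Eventually.of_forall fun v => ?_)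
    have h0 := hf0 (x, v)
    have hn : (0:ℝ) ≤ ‖v‖ := norm_nonneg v
    simp only [Pi.add_apply, norm_smul, Real.norm_of_nonneg h0]
    nlinarith [sq_nonneg (‖v‖ - 1), mul_nonneg h0 (sq_nonneg (‖v‖ - 1))]
  -- the first moment identity
  have hmom : ∀ x, ρ x • u x = ∫ v, f (x, v) • v := by
    intro x
    rw [hu x, smul_smul, mul_inv_cancel₀ (hρpos x).ne', one_smul]
  -- main a.e. facts in the space variable
  have hmainA : ∀ᵐ x : Td d, ∀ c : Vd d, ∫ v, f (x, v) * ⟪c, v - u x⟫ = 0 := by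
    filter_upwards [hs1, hs3] with x h1 h3
    intro c
    have hgc : Integrable (fun v : Vd d => f (x, v) • (v - u x)) := by
      refine ((h3.sub (h1.smul_const (u x)))).congr
        (Filter.Eventually.of_forall fun v => ?_)
      simp [smul_sub]
    have hzero : ∫ v, f (x, v) • (v - u x) = 0 := by
      have : (fun v : Vd d => f (x, v) • (v - u x))
          = fun v => f (x, v) • v - f (x, v) • u x := by
        funext v; rw [smul_sub]
      rw [this, integral_sub h3 (h1.smul_const (u x)), integral_smul_const,
        ← hρ x, ← hmom x, sub_self]
    calc ∫ v, f (x, v) * ⟪c, v - u x⟫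
        = ∫ v, ⟪c, f (x, v) • (v - u x)⟫ := by
          refine integral_congr_ae (Filter.Eventually.of_forall fun v => ?_)
          simp only [real_inner_smul_right]
      _ = ⟪c, ∫ v, f (x, v) • (v - u x)⟫ := integral_inner hgc c
      _ = 0 := by rw [hzero, inner_zero_right]
  have hmainB : ∀ᵐ x : Td d, 0 ≤ ∫ v, f (x, v) * ⟪v, v - u x⟫ := by
    filter_upwards [hs1, hs2, hs3] with x h1 h2 h3
    -- integrability of the pieces
    have h4 : Integrable (fun v : Vd d => f (x, v) * ‖v‖) := by
      refine h3.norm.congr (Filter.Eventually.of_forall fun v => ?_)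
      simp only [norm_smul, Real.norm_of_nonneg (hf0 (x, v))]
    have h5 : Integrable (fun v : Vd d => f (x, v) * ⟪v, v⟫) := by
      refine h2.congr (Filter.Eventually.of_forall fun v => ?_)
      simp only [real_inner_self_eq_norm_sq]; ring
    have h6 : Integrable (fun v : Vd d => f (x, v) * ⟪v, u x⟫) := by
      refine (h3.const_inner (u x)).congr (Filter.Eventually.of_forall fun v => ?_)
      simp only [real_inner_smul_right]
      rw [real_inner_comm]
    -- compute the integral
    have e1 : ∫ v, f (x, v) * ⟪v, v - u x⟫
        = (∫ v, ‖v‖^2 * f (x, v)) - ρ x * ⟪u x, u x⟫ := by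
      have hsplit : (fun v : Vd d => f (x, v) * ⟪v, v - u x⟫)
          = fun v => f (x, v) * ⟪v, v⟫ - f (x, v) * ⟪v, u x⟫ := by
        funext v; rw [inner_sub_right]; ring
      rw [hsplit, integral_sub h5 h6]
      have e2 : ∫ v, f (x, v) * ⟪v, v⟫ = ∫ v, ‖v‖^2 * f (x, v) := by
        refine integral_congr_ae (Filter.Eventually.of_forall fun v => ?_)
        simp only [real_inner_self_eq_norm_sq]; ring
      have e3 : ∫ v, f (x, v) * ⟪v, u x⟫ = ρ x * ⟪u x, u x⟫ := by
        calc ∫ v, f (x, v) * ⟪v, u x⟫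
            = ∫ v, ⟪u x, f (x, v) • v⟫ := by
              refine integral_congr_ae (Filter.Eventually.of_forall fun v => ?_)
              simp only [real_inner_smul_right]
              rw [real_inner_comm]
          _ = ⟪u x, ∫ v, f (x, v) • v⟫ := integral_inner h3 (u x)
          _ = ⟪u x, ρ x • u x⟫ := by rw [hmom x]
          _ = ρ x * ⟪u x, u x⟫ := real_inner_smul_right _ _ _
      rw [e2, e3]
    -- Cauchy–Schwarz
    have hρx : 0 < ∫ v, f (x, v) := by rw [← hρ x]; exact hρpos x
    have hcs := cs_aux (g := fun v : Vd d => f (x, v)) (h := fun v => ‖v‖)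
      (fun v => hf0 (x, v)) h1 h4
      (h2.congr (Filter.Eventually.of_forall fun v => by simp [mul_comm])) hρx
    have hnorm : ‖∫ v, f (x, v) • v‖ ≤ ∫ v, f (x, v) * ‖v‖ := by
      calc ‖∫ v, f (x, v) • v‖ ≤ ∫ v, ‖f (x, v) • v‖ := norm_integral_le_integral_norm _
        _ = ∫ v, f (x, v) * ‖v‖ := by
            refine integral_congr_ae (Filter.Eventually.of_forall fun v => ?_)
            simp only [norm_smul, Real.norm_of_nonneg (hf0 (x, v))]
    have hucs : ρ x * ⟪u x, u x⟫ ≤ ∫ v, ‖v‖^2 * f (x, v) := by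
      set M := ∫ v, f (x, v) • v with hMdef
      set S := ∫ v, f (x, v) * ‖v‖ with hSdef
      set R := ∫ v, f (x, v) with hRdef
      have hRρ : R = ρ x := (hρ x).symm
      have hM2 : ‖M‖^2 ≤ S^2 := by nlinarith [norm_nonneg M]
      have hux : ⟪u x, u x⟫ = (ρ x)⁻¹^2 * ‖M‖^2 := by
        rw [hu x, real_inner_smul_left, real_inner_smul_right, real_inner_self_eq_norm_sq,
          ← hMdef]
        ring
      rw [hux, ← hRρ]
      have hRpos : 0 < R := hρx
      have hcs' : S ^ 2 ≤ R * ∫ v : Vd d, f (x, v) * ‖v‖ ^ 2 := hcs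
      have hT : (∫ v : Vd d, f (x, v) * ‖v‖ ^ 2) = ∫ v : Vd d, ‖v‖^2 * f (x, v) := by
        refine integral_congr_ae (Filter.Eventually.of_forall fun v => ?_)
        simp [mul_comm]
      rw [hT] at hcs'
      have hinv0 : (0:ℝ) ≤ R⁻¹ := inv_nonneg.mpr hRpos.le
      have e4 : R * (R⁻¹ ^ 2 * ‖M‖ ^ 2) = R⁻¹ * ‖M‖ ^ 2 := by
        field_simp
      calc R * (R⁻¹ ^ 2 * ‖M‖ ^ 2) = R⁻¹ * ‖M‖ ^ 2 := e4
        _ ≤ R⁻¹ * S ^ 2 := mul_le_mul_of_nonneg_left hM2 hinv0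
        _ ≤ R⁻¹ * (R * ∫ v : Vd d, ‖v‖^2 * f (x, v)) := mul_le_mul_of_nonneg_left hcs' hinv0
        _ = ∫ v : Vd d, ‖v‖^2 * f (x, v) := by
            rw [← mul_assoc, inv_mul_cancel₀ hRpos.ne', one_mul]
    rw [e1]
    linarith [hucs]
  -- Claim 1 : ∫ K = 0
  have key1 : ∫ p, K p = 0 := by
    have hK' : Integrable K
        ((volume : Measure (Td d × Vd d)).prod (volume : Measure (Td d × Vd d))) := by
      rw [← vPP]; exact hK
    rw [vPP, integral_prod_symm _ hK']
    refine integral_eq_zero_of_ae ?_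
    filter_upwards [hK'.prod_left_ae] with p2 hsl
    have hsl' : Integrable (fun p1 : Td d × Vd d => K (p1, p2))
        ((volume : Measure (Td d)).prod (volume : Measure (Vd d))) := by
      rw [← vP]; exact hsl
    show ∫ p1 : Td d × Vd d, K (p1, p2) = 0
    rw [vP, integral_prod _ hsl']
    refine integral_eq_zero_of_ae ?_
    filter_upwards [hmainA] with x hx
    show ∫ v, K ((x, v), p2) = 0
    have hre : (fun v : Vd d => K ((x, v), p2))
        = fun v => (ψ (x - p2.1) * f p2) * (f (x, v) * ⟪p2.2, v - u x⟫) := by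
      funext v; simp only [hKdef]; ring
    rw [hre, integral_const_mul, hx p2.2, mul_zero]
  -- Claim 2 : 0 ≤ ∫ L
  have key2 : 0 ≤ ∫ p, L p := by
    have hL' : Integrable L
        ((volume : Measure (Td d × Vd d)).prod (volume : Measure (Td d × Vd d))) := by
      rw [← vPP]; exact hL
    rw [vPP, integral_prod_symm _ hL']
    refine integral_nonneg_of_ae ?_
    filter_upwards [hL'.prod_left_ae] with p2 hsl
    have hsl' : Integrable (fun p1 : Td d × Vd d => L (p1, p2))
        ((volume : Measure (Td d)).prod (volume : Measure (Vd d))) := by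
      rw [← vP]; exact hsl
    show 0 ≤ ∫ p1 : Td d × Vd d, L (p1, p2)
    rw [vP, integral_prod _ hsl']
    refine integral_nonneg_of_ae ?_
    filter_upwards [hmainB] with x hx
    show 0 ≤ ∫ v, L ((x, v), p2)
    have hre : (fun v : Vd d => L ((x, v), p2))
        = fun v => (ψ (x - p2.1) * f p2) * (f (x, v) * ⟪v, v - u x⟫) := by
      funext v; simp only [hLdef]; ring
    rw [hre, integral_const_mul]
    exact mul_nonneg (mul_nonneg (hψ0 _) (hf0 _)) hx
  -- assembling
  have hGKL : (fun p : (Td d × Vd d) × (Td d × Vd d) =>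
      ψ (p.1.1 - p.2.1) * f p.1 * f p.2 * ⟪p.1.2 - p.2.2, u p.1.1 - p.1.2⟫)
      = fun p => K p - L p := by
    funext p
    simp only [hKdef, hLdef, inner_sub_left, inner_sub_right]
    ring
  rw [hGKL, integral_sub hK hL, key1]
  linarith [key2]
end

section
/- Let ρ^ε, ρ be probability densities on T^d, u, ψ Lipschitz bounded functions (u : T^d → ℝ^d, ψ : T^d → ℝ), and u^ε measurable with ρ^ε|u^ε|² integrable. Then the cross term K₃ := ∫∫ ψ(x−y) ρ^ε(x)(ρ^ε(y)−ρ(y))(u(y)−u(x))·(u^ε(x)−u(x)) dx dy satisfies K₃ ≤ C (W₂²(ρ^ε, ρ) + ∫ ρ^ε(x)|u^ε(x)−u(x)|² dx), where C depends only on the Lipschitz norms and sup norms of ψ and u. -/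
open MeasureTheory
open scoped RealInnerProductSpace

/-- The Euclidean (quotient) distance on the flat torus. -/
noncomputable def torusDist {d : ℕ} (x y : Td d) : ℝ :=
  Real.sqrt (∑ i, (dist (x i) (y i))^2)

/-- Squared 2-Wasserstein distance on the torus. -/
noncomputable def W2sq {d : ℕ} (μ ν : Measure (Td d)) : ℝ :=
  sInf {r : ℝ | ∃ π : Measure (Td d × Td d),
    π.map Prod.fst = μ ∧ π.map Prod.snd = ν ∧
    r = ∫ p, (torusDist p.1 p.2)^2 ∂π}

/-!
For fixed `x`, the `y`-integral of `K₃` is `ρε x` times `∫ gₓ d(μ - ν)`, where `μ = ρε dx`,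
`ν = ρ dx` and `gₓ y = ψ (x - y) ⟪u y - u x, w x⟫` with `w = uε - u`. Since `ψ` and `u` are
bounded and Lipschitz, `gₓ` is `L ‖w x‖`-Lipschitz, so for every coupling `π` of `μ` and `ν`
this is at most `ρε x · L ‖w x‖ · D` with `D = ∫ |y - y'| dπ` (the easy half of
Kantorovich–Rubinstein). Integrating in `x` gives `K₃ ≤ L D B` with `B = ∫ ‖w‖ dμ`; Jensen gives
`D² ≤ ∫ |y - y'|² dπ` and `B² ≤ ∫ ρε ‖w‖²`, and Young's inequality `2DB ≤ D² + B²` finishes the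
proof after taking the infimum over `π`.
-/

open scoped NNReal

theorem integral_sub_integral_le_of_coupling {X : Type*} [MeasurableSpace X]
    {μ ν : Measure X} {π : Measure (X × X)} (hπ₁ : π.map Prod.fst = μ)
    (hπ₂ : π.map Prod.snd = ν) {g : X → ℝ} {c : X × X → ℝ} (hgμ : Integrable g μ)
    (hgν : Integrable g ν) (hc : Integrable c π) (hgc : ∀ p, g p.1 - g p.2 ≤ c p) :
    ∫ x, g x ∂μ - ∫ x, g x ∂ν ≤ ∫ p, c p ∂π := by
  subst hπ₁ hπ₂
  have hg₁ : Integrable (fun p => g p.1) π := hgμ.comp_measurable measurable_fst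
  have hg₂ : Integrable (fun p => g p.2) π := hgν.comp_measurable measurable_snd
  rw [integral_map measurable_fst.aemeasurable hgμ.1,
    integral_map measurable_snd.aemeasurable hgν.1, ← integral_sub hg₁ hg₂]
  exact integral_mono (hg₁.sub hg₂) hc hgc

theorem sq_integral_le_integral_sq {α : Type*} [MeasurableSpace α] {μ : Measure α}
    [IsProbabilityMeasure μ] {f : α → ℝ} (hf : MemLp f 2 μ) :
    (∫ x, f x ∂μ) ^ 2 ≤ ∫ x, f x ^ 2 ∂μ := by
  have h := ProbabilityTheory.variance_nonneg f μ
  rw [ProbabilityTheory.variance_eq_sub hf, sub_nonneg] at h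
  simpa using h

section WithDensity

variable {α : Type*} [MeasurableSpace α] {μ : Measure α} {ρ : α → ℝ}

theorem integral_withDensity_ofReal (hρ : Measurable ρ) (hρ0 : ∀ x, 0 ≤ ρ x) (g : α → ℝ) :
    ∫ x, g x ∂μ.withDensity (fun x => ENNReal.ofReal (ρ x)) = ∫ x, ρ x * g x ∂μ := by
  rw [integral_withDensity_eq_integral_toReal_smul hρ.ennreal_ofReal
    (ae_of_all _ fun _ => ENNReal.ofReal_lt_top)]
  simp [ENNReal.toReal_ofReal (hρ0 _)]

theorem integrable_withDensity_ofReal_iff (hρ : Measurable ρ) (hρ0 : ∀ x, 0 ≤ ρ x)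
    {g : α → ℝ} :
    Integrable g (μ.withDensity fun x => ENNReal.ofReal (ρ x)) ↔
      Integrable (fun x => ρ x * g x) μ := by
  rw [integrable_withDensity_iff_integrable_smul' hρ.ennreal_ofReal
    (ae_of_all _ fun _ => ENNReal.ofReal_lt_top)]
  simp [ENNReal.toReal_ofReal (hρ0 _)]

theorem isProbabilityMeasure_withDensity_ofReal (hρ0 : ∀ x, 0 ≤ ρ x) (hρi : Integrable ρ μ)
    (hρ1 : ∫ x, ρ x ∂μ = 1) :
    IsProbabilityMeasure (μ.withDensity fun x => ENNReal.ofReal (ρ x)) := by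
  constructor
  rw [withDensity_apply _ MeasurableSet.univ, setLIntegral_univ,
    ← ofReal_integral_eq_lintegral_ofReal hρi (ae_of_all _ hρ0), hρ1, ENNReal.ofReal_one]

end WithDensity

theorem LipschitzWith.mul_of_forall_norm_le {α R : Type*} [PseudoMetricSpace α]
    [SeminormedRing R] {f g : α → R} {Kf Kg Mf Mg : ℝ≥0} (hf : LipschitzWith Kf f)
    (hg : LipschitzWith Kg g) (hfM : ∀ x, ‖f x‖ ≤ Mf) (hgM : ∀ x, ‖g x‖ ≤ Mg) :
    LipschitzWith (Kf * Mg + Mf * Kg) fun x => f x * g x := by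
  refine .of_dist_le_mul fun x y => ?_
  have hfxy := hf.dist_le_mul x y
  have hgxy := hg.dist_le_mul x y
  rw [dist_eq_norm] at hfxy hgxy ⊢
  calc ‖f x * g x - f y * g y‖ = ‖(f x - f y) * g x + f y * (g x - g y)‖ := by noncomm_ring
    _ ≤ ‖f x - f y‖ * ‖g x‖ + ‖f y‖ * ‖g x - g y‖ :=
        (norm_add_le _ _).trans (add_le_add (norm_mul_le _ _) (norm_mul_le _ _))
    _ ≤ Kf * dist x y * Mg + Mf * (Kg * dist x y) := by
        gcongr
        exacts [hgM x, hfM y]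
    _ = ↑(Kf * Mg + Mf * Kg) * dist x y := by push_cast; ring

theorem LipschitzWith.inner_sub_const {α E : Type*} [PseudoMetricSpace α]
    [SeminormedAddCommGroup E] [InnerProductSpace ℝ E] {u : α → E} {K : ℝ≥0}
    (hu : LipschitzWith K u) (a v : E) : LipschitzWith (K * ‖v‖₊) fun y => ⟪u y - a, v⟫ := by
  refine .of_dist_le_mul fun y y' => ?_
  rw [Real.dist_eq, ← inner_sub_left, sub_sub_sub_cancel_right]
  calc |⟪u y - u y', v⟫| ≤ ‖u y - u y'‖ * ‖v‖ := abs_real_inner_le_norm _ _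
    _ ≤ K * dist y y' * ‖v‖ := by rw [← dist_eq_norm]; gcongr; exact hu.dist_le_mul y y'
    _ = ↑(K * ‖v‖₊) * dist y y' := by push_cast; ring

theorem lipschitzWith_mul_inner_sub {G E : Type*} [SeminormedAddCommGroup G]
    [SeminormedAddCommGroup E] [InnerProductSpace ℝ E] {ψ : G → ℝ} {u : G → E}
    {Lψ Lu Mψ Mu : ℝ≥0} (hψ : LipschitzWith Lψ ψ) (hu : LipschitzWith Lu u)
    (hψM : ∀ z, ‖ψ z‖ ≤ Mψ) (huM : ∀ z, ‖u z‖ ≤ Mu) (x : G) (v : E) :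
    LipschitzWith ((Lψ * (2 * Mu) + Mψ * Lu) * ‖v‖₊)
      fun y => ψ (x - y) * ⟪u y - u x, v⟫ := by
  have hψx : LipschitzWith Lψ fun y => ψ (x - y) := by
    simpa [Function.comp_def] using hψ.comp (IsometryEquiv.subLeft x).isometry.lipschitz
  have hinner : ∀ y, ‖⟪u y - u x, v⟫‖ ≤ ↑(2 * Mu * ‖v‖₊) := fun y =>
    calc ‖⟪u y - u x, v⟫‖ ≤ ‖u y - u x‖ * ‖v‖ := norm_inner_le_norm _ _
      _ ≤ (Mu + Mu) * ‖v‖ := by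
          gcongr
          exact (norm_sub_le _ _).trans (add_le_add (huM y) (huM x))
      _ = ↑(2 * Mu * ‖v‖₊) := by push_cast; ring
  have h := hψx.mul_of_forall_norm_le (hu.inner_sub_const (u x) v) (fun y => hψM _) hinner
  rwa [show Lψ * (2 * Mu * ‖v‖₊) + Mψ * (Lu * ‖v‖₊) = (Lψ * (2 * Mu) + Mψ * Lu) * ‖v‖₊ by
    ring] at h

theorem exists_lipschitzWith_mul_inner_sub {G E : Type*} [SeminormedAddCommGroup G]
    [CompactSpace G] [SeminormedAddCommGroup E] [InnerProductSpace ℝ E] {ψ : G → ℝ}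
    {u : G → E} {Lψ Lu : ℝ≥0} (hψ : LipschitzWith Lψ ψ) (hu : LipschitzWith Lu u) :
    ∃ L : ℝ≥0, ∀ x v, LipschitzWith (L * ‖v‖₊) fun y => ψ (x - y) * ⟪u y - u x, v⟫ :=
  let ψc : C(G, ℝ) := ⟨ψ, hψ.continuous⟩
  let uc : C(G, E) := ⟨u, hu.continuous⟩
  ⟨_, lipschitzWith_mul_inner_sub (Mψ := ‖ψc‖₊) (Mu := ‖uc‖₊) hψ hu ψc.norm_coe_le_norm
    uc.norm_coe_le_norm⟩

section Torus

variable {d : ℕ}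

theorem dist_le_torusDist (x y : Td d) : dist x y ≤ torusDist x y := by
  refine (dist_pi_le_iff (Real.sqrt_nonneg _)).2 fun i => ?_
  rw [Real.le_sqrt dist_nonneg (Finset.sum_nonneg fun _ _ => sq_nonneg _)]
  exact Finset.single_le_sum (f := fun j => dist (x j) (y j) ^ 2) (fun _ _ => sq_nonneg _)
    (Finset.mem_univ i)

theorem continuous_torusDist : Continuous fun p : Td d × Td d => torusDist p.1 p.2 := by
  unfold torusDist
  fun_prop

theorem le_mul_W2sq_add {μ ν : Measure (Td d)} [IsProbabilityMeasure μ]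
    [IsProbabilityMeasure ν] {a C E : ℝ} (hC : 0 < C)
    (h : ∀ π : Measure (Td d × Td d), π.map Prod.fst = μ → π.map Prod.snd = ν →
      a ≤ C * (∫ p, torusDist p.1 p.2 ^ 2 ∂π + E)) :
    a ≤ C * (W2sq μ ν + E) := by
  have hW : a / C - E ≤ W2sq μ ν := by
    refine le_csInf ⟨_, μ.prod ν, by simp, by simp, rfl⟩ ?_
    rintro r ⟨π, hπ₁, hπ₂, rfl⟩
    rw [sub_le_iff_le_add, div_le_iff₀ hC]
    linarith [h π hπ₁ hπ₂]
  rw [sub_le_iff_le_add, div_le_iff₀ hC] at hW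
  linarith

theorem integral_sub_mul_le_mul_integral_torusDist {ρ₁ ρ₂ : Td d → ℝ} (hρ₁ : Measurable ρ₁)
    (hρ₂ : Measurable ρ₂) (hρ₁0 : ∀ x, 0 ≤ ρ₁ x) (hρ₂0 : ∀ x, 0 ≤ ρ₂ x)
    {π : Measure (Td d × Td d)} [IsFiniteMeasure π]
    (hπ₁ : π.map Prod.fst = volume.withDensity fun x => ENNReal.ofReal (ρ₁ x))
    (hπ₂ : π.map Prod.snd = volume.withDensity fun x => ENNReal.ofReal (ρ₂ x))
    {g : Td d → ℝ} {K : ℝ≥0} (hg : LipschitzWith K g) :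
    ∫ y, (ρ₁ y - ρ₂ y) * g y ≤ K * ∫ p, torusDist p.1 p.2 ∂π := by
  have hg₁ : Integrable g (π.map Prod.fst) :=
    hg.continuous.integrable_of_hasCompactSupport (.of_compactSpace g)
  have hg₂ : Integrable g (π.map Prod.snd) :=
    hg.continuous.integrable_of_hasCompactSupport (.of_compactSpace g)
  have hcost : Integrable (fun p : Td d × Td d => K * torusDist p.1 p.2) π :=
    (continuous_const.mul continuous_torusDist).integrable_of_hasCompactSupport
      (.of_compactSpace _)
  rw [hπ₁] at hg₁
  rw [hπ₂] at hg₂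
  rw [← integral_const_mul]
  calc ∫ y, (ρ₁ y - ρ₂ y) * g y
      = ∫ y, g y ∂volume.withDensity (fun x => ENNReal.ofReal (ρ₁ x))
          - ∫ y, g y ∂volume.withDensity (fun x => ENNReal.ofReal (ρ₂ x)) := by
        rw [integral_withDensity_ofReal hρ₁ hρ₁0, integral_withDensity_ofReal hρ₂ hρ₂0,
          ← integral_sub ((integrable_withDensity_ofReal_iff hρ₁ hρ₁0).1 hg₁)
            ((integrable_withDensity_ofReal_iff hρ₂ hρ₂0).1 hg₂)]
        simp_rw [sub_mul]
    _ ≤ ∫ p, K * torusDist p.1 p.2 ∂π := by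
        refine integral_sub_integral_le_of_coupling hπ₁ hπ₂ hg₁ hg₂ hcost fun p => ?_
        calc g p.1 - g p.2 ≤ dist (g p.1) (g p.2) :=
              (le_abs_self _).trans_eq (Real.dist_eq _ _).symm
          _ ≤ K * dist p.1 p.2 := hg.dist_le_mul _ _
          _ ≤ K * torusDist p.1 p.2 := by gcongr; exact dist_le_torusDist _ _

theorem integral_crossTerm_le_of_coupling {ψ : Td d → ℝ} {u uε : Td d → Vd d}
    {ρε ρ : Td d → ℝ} {L : ℝ≥0}
    (hL : ∀ x v, LipschitzWith (L * ‖v‖₊) fun y => ψ (x - y) * ⟪u y - u x, v⟫)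
    (hρε : Measurable ρε) (hρ : Measurable ρ) (hρε0 : ∀ x, 0 ≤ ρε x) (hρ0 : ∀ x, 0 ≤ ρ x)
    (hw : Integrable (fun x => ‖uε x - u x‖) (volume.withDensity fun x => ENNReal.ofReal (ρε x)))
    (hF : Integrable fun q : Td d × Td d =>
      ψ (q.1 - q.2) * ρε q.1 * (ρε q.2 - ρ q.2) * ⟪u q.2 - u q.1, uε q.1 - u q.1⟫)
    {π : Measure (Td d × Td d)} [IsFiniteMeasure π]
    (hπ₁ : π.map Prod.fst = volume.withDensity fun x => ENNReal.ofReal (ρε x))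
    (hπ₂ : π.map Prod.snd = volume.withDensity fun x => ENNReal.ofReal (ρ x)) :
    ∫ q : Td d × Td d,
        ψ (q.1 - q.2) * ρε q.1 * (ρε q.2 - ρ q.2) * ⟪u q.2 - u q.1, uε q.1 - u q.1⟫
      ≤ L * ((∫ p, torusDist p.1 p.2 ∂π) *
          ∫ x, ‖uε x - u x‖ ∂volume.withDensity fun x => ENNReal.ofReal (ρε x)) := by
  set F : Td d × Td d → ℝ := fun q =>
    ψ (q.1 - q.2) * ρε q.1 * (ρε q.2 - ρ q.2) * ⟪u q.2 - u q.1, uε q.1 - u q.1⟫ with F_def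
  set h : Td d → ℝ := fun x =>
    ∫ y, (ρε y - ρ y) * (ψ (x - y) * ⟪u y - u x, uε x - u x⟫) with h_def
  have hFh : ∀ x, ∫ y, F (x, y) = ρε x * h x := fun x => by
    rw [h_def, ← integral_const_mul]
    congr 1 with y
    simp only [F_def]
    ring
  rw [Measure.volume_eq_prod] at hF
  have hh : Integrable h (volume.withDensity fun x => ENNReal.ofReal (ρε x)) := by
    rw [integrable_withDensity_ofReal_iff hρε hρε0]
    simpa only [hFh] using hF.integral_prod_left
  calc ∫ q, F q
      = ∫ x, h x ∂volume.withDensity fun x => ENNReal.ofReal (ρε x) := by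
        rw [Measure.volume_eq_prod, integral_prod _ hF, integral_withDensity_ofReal hρε hρε0]
        simp only [hFh]
    _ ≤ ∫ x, L * (∫ p, torusDist p.1 p.2 ∂π) * ‖uε x - u x‖
          ∂volume.withDensity fun x => ENNReal.ofReal (ρε x) := by
        refine integral_mono hh (hw.const_mul _) fun x => ?_
        calc h x ≤ ↑(L * ‖uε x - u x‖₊) * ∫ p, torusDist p.1 p.2 ∂π :=
              integral_sub_mul_le_mul_integral_torusDist hρε hρ hρε0 hρ0 hπ₁ hπ₂ (hL x _)
          _ = _ := by push_cast; ring
    _ = _ := by rw [integral_const_mul]; ring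

end Torus

/-- The cross term
`K₃ = ∫∫ ψ(x−y) ρ^ε(x)(ρ^ε(y)−ρ(y))(u(y)−u(x))·(u^ε(x)−u(x)) dx dy`
is bounded by `C (W₂²(ρ^ε,ρ) + ∫ ρ^ε|u^ε−u|²)`, where `C` depends only on `ψ` and `u`
(through their Lipschitz and sup norms). -/
theorem cross_term_bound {d : ℕ} (ψ : Td d → ℝ) (u : Td d → Vd d) (Lψ Lu : NNReal)
    (hψ : LipschitzWith Lψ ψ) (hu : LipschitzWith Lu u) :
    ∃ C > 0, ∀ (ρε ρ : Td d → ℝ) (uε : Td d → Vd d),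
      Measurable ρε → Measurable ρ → Measurable uε →
      (∀ x, 0 ≤ ρε x) → (∀ x, 0 ≤ ρ x) →
      Integrable ρε → Integrable ρ →
      (∫ x, ρε x) = 1 → (∫ x, ρ x) = 1 →
      Integrable (fun x => ρε x * ‖uε x‖^2) →
      Integrable (fun q : Td d × Td d =>
        ψ (q.1 - q.2) * ρε q.1 * (ρε q.2 - ρ q.2) * ⟪u q.2 - u q.1, uε q.1 - u q.1⟫) →
      (∫ q : Td d × Td d,
          ψ (q.1 - q.2) * ρε q.1 * (ρε q.2 - ρ q.2) * ⟪u q.2 - u q.1, uε q.1 - u q.1⟫)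
        ≤ C * (W2sq (volume.withDensity fun x => ENNReal.ofReal (ρε x))
                    (volume.withDensity fun x => ENNReal.ofReal (ρ x))
               + ∫ x, ρε x * ‖uε x - u x‖^2) := by
  obtain ⟨L, hL⟩ := exists_lipschitzWith_mul_inner_sub hψ hu
  refine ⟨L / 2 + 1, by positivity, ?_⟩
  intro ρε ρ uε hρε hρ huε hρε0 hρ0 hρεi hρi hρε1 hρ1 huε2 hF
  set μ := volume.withDensity fun x => ENNReal.ofReal (ρε x)
  have := isProbabilityMeasure_withDensity_ofReal hρε0 hρεi hρε1
  have := isProbabilityMeasure_withDensity_ofReal hρ0 hρi hρ1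
  have hw : MemLp (fun x => uε x - u x) 2 μ := by
    have huε : MemLp uε 2 μ := (memLp_two_iff_integrable_sq_norm huε.aestronglyMeasurable).2
      ((integrable_withDensity_ofReal_iff hρε hρε0).2 huε2)
    exact huε.sub (hu.continuous.memLp_of_hasCompactSupport (.of_compactSpace u))
  rw [← integral_withDensity_ofReal hρε hρε0]
  refine le_mul_W2sq_add (by positivity) fun π hπ₁ hπ₂ => ?_
  have : IsProbabilityMeasure (π.map Prod.fst) := hπ₁ ▸ inferInstance
  have := Measure.isProbabilityMeasure_of_map (μ := π) Prod.fst
  set D := ∫ p, torusDist p.1 p.2 ∂π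
  set B := ∫ x, ‖uε x - u x‖ ∂μ
  have hD := sq_integral_le_integral_sq (μ := π)
    (continuous_torusDist.memLp_of_hasCompactSupport (.of_compactSpace _))
  have hB := sq_integral_le_integral_sq hw.norm
  calc _ ≤ L * (D * B) :=
        integral_crossTerm_le_of_coupling hL hρε hρ hρε0 hρ0 (hw.norm.integrable one_le_two) hF
          hπ₁ hπ₂
    _ ≤ _ := by nlinarith [two_mul_le_add_sq D B, L.coe_nonneg, sq_nonneg D, sq_nonneg B]
end
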